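/- Let (M,g) be a smooth Riemannian manifold of dimension n ≥ 3, N = 2n/(n-2), τ a smooth function, σ a smooth symmetric covariant 2-tensor field on M, φ and ψ smooth positive functions, and W a smooth one-form. Set g̃ = ψ^{N-2} g, σ̃ = ψ^{-2} σ, φ̃ = ψ^{-1} φ, and W̃ = ψ^{N-2} W. Then the method-B parametrized data built from (g, σ, τ; φ, W) and from (g̃, σ̃, τ; φ̃, W̃) coincide: φ^{N-2} g = φ̃^{N-2} g̃, and (τ/n) φ^{N-2} g + φ^{-2}(σ + φ^N L̊_g W) = (τ/n) φ̃^{N-2} g̃ + φ̃^{-2}(σ̃ + φ̃^N L̊_{g̃} W̃). -/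

import Mathlib

noncomputable section

open scoped BigOperators

/-- The `i`-th partial derivative of a function on `ℝⁿ` (Euclidean coordinates). -/
def pd {n : ℕ} (f : EuclideanSpace ℝ (Fin n) → ℝ) (i : Fin n)
    (x : EuclideanSpace ℝ (Fin n)) : ℝ :=
  fderiv ℝ f x (EuclideanSpace.single i 1)

/-- The Christoffel symbols `Γ^k_{ij}` of the Levi-Civita connection of the metric `g`,
`Γ^k_{ij} = ½ g^{kl} (∂_i g_{jl} + ∂_j g_{il} - ∂_l g_{ij})` (indices raised with the
inverse matrix of `g`). -/
def christoffel {n : ℕ} (g : EuclideanSpace ℝ (Fin n) → Matrix (Fin n) (Fin n) ℝ)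
    (k i j : Fin n) (x : EuclideanSpace ℝ (Fin n)) : ℝ :=
  (1 / 2) * ∑ l, (g x)⁻¹ k l *
    (pd (fun y => g y j l) i x + pd (fun y => g y i l) j x - pd (fun y => g y i j) l x)

/-- The covariant derivative `∇_i W_j = ∂_i W_j - Γ^k_{ij} W_k` of a one-form `W`. -/
def covDOne {n : ℕ} (g : EuclideanSpace ℝ (Fin n) → Matrix (Fin n) (Fin n) ℝ)
    (W : EuclideanSpace ℝ (Fin n) → Fin n → ℝ) (i j : Fin n)
    (x : EuclideanSpace ℝ (Fin n)) : ℝ :=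
  pd (fun y => W y j) i x - ∑ k, christoffel g k i j x * W x k

/-- The conformal Killing operator on one-forms,
`(L̊_g W)_{ij} = ∇_i W_j + ∇_j W_i - (2/n) (∇^k W_k) g_{ij}`, with `∇^k W_k = g^{kl} ∇_k W_l`. -/
def confKilling {n : ℕ} (g : EuclideanSpace ℝ (Fin n) → Matrix (Fin n) (Fin n) ℝ)
    (W : EuclideanSpace ℝ (Fin n) → Fin n → ℝ) (i j : Fin n)
    (x : EuclideanSpace ℝ (Fin n)) : ℝ :=
  covDOne g W i j x + covDOne g W j i x -
    (2 / (n : ℝ)) * (∑ k, ∑ l, (g x)⁻¹ k l * covDOne g W k l x) * g x i j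

/-- The covariant derivative `∇_l h_{ij} = ∂_l h_{ij} - Γ^m_{li} h_{mj} - Γ^m_{lj} h_{im}`
of a covariant 2-tensor field `h`. -/
def covDTwo {n : ℕ} (g : EuclideanSpace ℝ (Fin n) → Matrix (Fin n) (Fin n) ℝ)
    (h : EuclideanSpace ℝ (Fin n) → Matrix (Fin n) (Fin n) ℝ) (l i j : Fin n)
    (x : EuclideanSpace ℝ (Fin n)) : ℝ :=
  pd (fun y => h y i j) l x - ∑ m, christoffel g m l i x * h x m j
    - ∑ m, christoffel g m l j x * h x i m

/-- The divergence of a covariant 2-tensor field, `(div_g h)_i = -∇^k h_{ki} = -g^{kl} ∇_l h_{ki}`. -/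
def divT {n : ℕ} (g : EuclideanSpace ℝ (Fin n) → Matrix (Fin n) (Fin n) ℝ)
    (h : EuclideanSpace ℝ (Fin n) → Matrix (Fin n) (Fin n) ℝ) (i : Fin n)
    (x : EuclideanSpace ℝ (Fin n)) : ℝ :=
  - ∑ k, ∑ l, (g x)⁻¹ k l * covDTwo g h l k i x

/-- `g` is a (smooth) Riemannian metric in coordinates: a smooth field of positive-definite
(symmetric) matrices. -/
def IsRiemannianMetric {n : ℕ}
    (g : EuclideanSpace ℝ (Fin n) → Matrix (Fin n) (Fin n) ℝ) : Prop :=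
  (∀ x, (g x).PosDef) ∧ ∀ i j, ContDiff ℝ (⊤ : ℕ∞) fun x => g x i j

/-- A covariant 2-tensor field is trace-free with respect to `g` : `g^{ij} h_{ij} = 0`. -/
def TraceFree {n : ℕ} (g h : EuclideanSpace ℝ (Fin n) → Matrix (Fin n) (Fin n) ℝ) : Prop :=
  ∀ x, ∑ i, ∑ j, (g x)⁻¹ i j * h x i j = 0

/-- A smooth symmetric covariant 2-tensor field. -/
def IsSmoothSym2Tensor {n : ℕ}
    (h : EuclideanSpace ℝ (Fin n) → Matrix (Fin n) (Fin n) ℝ) : Prop :=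
  (∀ x, (h x).IsSymm) ∧ ∀ i j, ContDiff ℝ (⊤ : ℕ∞) fun x => h x i j

/-- A smooth one-form. -/
def IsSmoothOneForm {n : ℕ} (W : EuclideanSpace ℝ (Fin n) → Fin n → ℝ) : Prop :=
  ∀ j, ContDiff ℝ (⊤ : ℕ∞) fun x => W x j

/-- A TT-tensor with respect to `g`: a symmetric covariant 2-tensor field which is
trace-free and divergence-free with respect to `g`. -/
def IsTT {n : ℕ} (g σ : EuclideanSpace ℝ (Fin n) → Matrix (Fin n) (Fin n) ℝ) : Prop :=
  (∀ x, (σ x).IsSymm) ∧ TraceFree g σ ∧ ∀ i x, divT g σ i x = 0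

/-- The conformally parametrized metric `ĝ = φ^{N-2} g`. -/
def hatg {n : ℕ} (N : ℝ) (g : EuclideanSpace ℝ (Fin n) → Matrix (Fin n) (Fin n) ℝ)
    (φ : EuclideanSpace ℝ (Fin n) → ℝ) :
    EuclideanSpace ℝ (Fin n) → Matrix (Fin n) (Fin n) ℝ :=
  fun x => φ x ^ (N - 2) • g x

/-- The method-B parametrized second fundamental form
`K̂ = (τ/n) ĝ + φ^{-2} (σ + φ^N L̊_g W)`. -/
def hatK {n : ℕ} (N : ℝ) (g σ : EuclideanSpace ℝ (Fin n) → Matrix (Fin n) (Fin n) ℝ)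
    (τ φ : EuclideanSpace ℝ (Fin n) → ℝ) (W : EuclideanSpace ℝ (Fin n) → Fin n → ℝ) :
    EuclideanSpace ℝ (Fin n) → Matrix (Fin n) (Fin n) ℝ :=
  fun x => Matrix.of fun i j =>
    τ x / (n : ℝ) * (φ x ^ (N - 2) * g x i j) +
      φ x ^ (-2 : ℝ) * (σ x i j + φ x ^ N * confKilling g W i j x)


/-! ### Auxiliary lemmas -/

section Aux

variable {n : ℕ}

lemma pd_mul (a b : EuclideanSpace ℝ (Fin n) → ℝ) (i : Fin n) (x : EuclideanSpace ℝ (Fin n))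
    (ha : DifferentiableAt ℝ a x) (hb : DifferentiableAt ℝ b x) :
    pd (fun y => a y * b y) i x = pd a i x * b x + a x * pd b i x := by
  unfold pd
  rw [fderiv_fun_mul ha hb]
  simp only [ContinuousLinearMap.add_apply, ContinuousLinearMap.smul_apply, smul_eq_mul]
  ring

lemma gdetUnit (g : EuclideanSpace ℝ (Fin n) → Matrix (Fin n) (Fin n) ℝ)
    (hg : IsRiemannianMetric g) (x : EuclideanSpace ℝ (Fin n)) : IsUnit (g x).det :=
  isUnit_iff_ne_zero.mpr (ne_of_gt (hg.1 x).det_pos)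

lemma gsymm (g : EuclideanSpace ℝ (Fin n) → Matrix (Fin n) (Fin n) ℝ)
    (hg : IsRiemannianMetric g) (x : EuclideanSpace ℝ (Fin n)) (a b : Fin n) :
    g x a b = g x b a := by
  simpa using (hg.1 x).1.apply b a

lemma ginvsymm (g : EuclideanSpace ℝ (Fin n) → Matrix (Fin n) (Fin n) ℝ)
    (hg : IsRiemannianMetric g) (x : EuclideanSpace ℝ (Fin n)) (a b : Fin n) :
    (g x)⁻¹ a b = (g x)⁻¹ b a := by
  simpa using ((hg.1 x).1.inv).apply b a

lemma gdelta (g : EuclideanSpace ℝ (Fin n) → Matrix (Fin n) (Fin n) ℝ)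
    (hg : IsRiemannianMetric g) (x : EuclideanSpace ℝ (Fin n)) (k a : Fin n) :
    ∑ l, (g x)⁻¹ k l * g x a l = if k = a then 1 else 0 := by
  have h1 : ((g x)⁻¹ * g x) k a = (1 : Matrix (Fin n) (Fin n) ℝ) k a := by
    rw [Matrix.nonsing_inv_mul _ (gdetUnit g hg x)]
  rw [Matrix.mul_apply, Matrix.one_apply] at h1
  rw [← h1]
  exact Finset.sum_congr rfl fun l _ => by rw [gsymm g hg x a l]

lemma smul_inv_eq (g : EuclideanSpace ℝ (Fin n) → Matrix (Fin n) (Fin n) ℝ)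
    (hg : IsRiemannianMetric g)
    (u : EuclideanSpace ℝ (Fin n) → ℝ) (hupos : ∀ x, 0 < u x)
    (x : EuclideanSpace ℝ (Fin n)) :
    (u x • g x)⁻¹ = (u x)⁻¹ • (g x)⁻¹ := by
  apply Matrix.inv_eq_right_inv
  rw [Matrix.smul_mul, Matrix.mul_smul, smul_smul, mul_inv_cancel₀ (ne_of_gt (hupos x)),
    one_smul, Matrix.mul_nonsing_inv _ (gdetUnit g hg x)]

lemma christoffel_conf (g : EuclideanSpace ℝ (Fin n) → Matrix (Fin n) (Fin n) ℝ)
    (hg : IsRiemannianMetric g)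
    (u : EuclideanSpace ℝ (Fin n) → ℝ) (hu : Differentiable ℝ u) (hupos : ∀ x, 0 < u x)
    (k i j : Fin n) (x : EuclideanSpace ℝ (Fin n)) :
    christoffel (fun y => u y • g y) k i j x
      = christoffel g k i j x + (2 * u x)⁻¹ *
          ((if k = j then pd u i x else 0) + (if k = i then pd u j x else 0)
            - (∑ l, (g x)⁻¹ k l * pd u l x) * g x i j) := by
  have hgd : ∀ a b, DifferentiableAt ℝ (fun y => g y a b) x :=
    fun a b => ((hg.2 a b).differentiable (by simp)).differentiableAt
  have hne : u x ≠ 0 := ne_of_gt (hupos x)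
  unfold christoffel
  simp only [smul_inv_eq g hg u hupos, Matrix.smul_apply, smul_eq_mul]
  have expand : ∀ (a b c : Fin n), pd (fun y => u y * g y a b) c x
      = pd u c x * g x a b + u x * pd (fun y => g y a b) c x :=
    fun a b c => pd_mul u (fun y => g y a b) c x (hu x) (hgd a b)
  simp only [expand]
  have key : ∀ l : Fin n,
      (u x)⁻¹ * (g x)⁻¹ k l *
        (pd u i x * g x j l + u x * pd (fun y => g y j l) i x
          + (pd u j x * g x i l + u x * pd (fun y => g y i l) j x)
          - (pd u l x * g x i j + u x * pd (fun y => g y i j) l x))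
      = (g x)⁻¹ k l *
          (pd (fun y => g y j l) i x + pd (fun y => g y i l) j x - pd (fun y => g y i j) l x)
        + (pd u i x * ((u x)⁻¹ * ((g x)⁻¹ k l * g x j l))
            + pd u j x * ((u x)⁻¹ * ((g x)⁻¹ k l * g x i l))
            - (u x)⁻¹ * g x i j * ((g x)⁻¹ k l * pd u l x)) := by
    intro l
    field_simp
    ring
  rw [Finset.sum_congr rfl fun l _ => key l, Finset.sum_add_distrib]
  have h1 : ∑ l, (pd u i x * ((u x)⁻¹ * ((g x)⁻¹ k l * g x j l))
        + pd u j x * ((u x)⁻¹ * ((g x)⁻¹ k l * g x i l))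
        - (u x)⁻¹ * g x i j * ((g x)⁻¹ k l * pd u l x))
      = pd u i x * ((u x)⁻¹ * (if k = j then 1 else 0))
        + pd u j x * ((u x)⁻¹ * (if k = i then 1 else 0))
        - (u x)⁻¹ * g x i j * ∑ l, (g x)⁻¹ k l * pd u l x := by
    rw [Finset.sum_sub_distrib, Finset.sum_add_distrib, ← Finset.mul_sum, ← Finset.mul_sum,
      ← Finset.mul_sum, ← Finset.mul_sum, ← Finset.mul_sum, gdelta g hg x k j,
      gdelta g hg x k i]
  rw [h1]
  simp only [mul_ite, mul_one, mul_zero, ite_mul, zero_mul]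
  split_ifs <;> subst_vars <;> field_simp <;> ring

lemma covDOne_conf (g : EuclideanSpace ℝ (Fin n) → Matrix (Fin n) (Fin n) ℝ)
    (hg : IsRiemannianMetric g)
    (u : EuclideanSpace ℝ (Fin n) → ℝ) (hu : Differentiable ℝ u) (hupos : ∀ x, 0 < u x)
    (W : EuclideanSpace ℝ (Fin n) → Fin n → ℝ) (hW : IsSmoothOneForm W)
    (i j : Fin n) (x : EuclideanSpace ℝ (Fin n)) :
    covDOne (fun y => u y • g y) (fun y k => u y * W y k) i j x
      = u x * covDOne g W i j x
        + (1 / 2) * (pd u i x * W x j - pd u j x * W x i)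
        + (1 / 2) * (∑ k, (∑ l, (g x)⁻¹ k l * pd u l x) * W x k) * g x i j := by
  have hne : u x ≠ 0 := ne_of_gt (hupos x)
  have hWd : ∀ a, DifferentiableAt ℝ (fun y => W y a) x :=
    fun a => ((hW a).differentiable (by simp)).differentiableAt
  unfold covDOne
  beta_reduce
  rw [pd_mul u (fun y => W y j) i x (hu x) (hWd j)]
  simp only [christoffel_conf g hg u hu hupos]
  have key : ∀ k : Fin n,
      (christoffel g k i j x + (2 * u x)⁻¹ *
          ((if k = j then pd u i x else 0) + (if k = i then pd u j x else 0)
            - (∑ l, (g x)⁻¹ k l * pd u l x) * g x i j)) * (u x * W x k)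
      = u x * (christoffel g k i j x * W x k)
        + ((1 / 2) * ((if k = j then pd u i x else 0) * W x k)
            + (1 / 2) * ((if k = i then pd u j x else 0) * W x k))
        - (1 / 2) * ((∑ l, (g x)⁻¹ k l * pd u l x) * W x k * g x i j) := by
    intro k
    split_ifs <;> field_simp <;> ring
  rw [Finset.sum_congr rfl fun k _ => key k, Finset.sum_sub_distrib, Finset.sum_add_distrib,
    Finset.sum_add_distrib, ← Finset.mul_sum, ← Finset.mul_sum, ← Finset.mul_sum,
    ← Finset.mul_sum]
  simp only [ite_mul, zero_mul, Finset.sum_ite_eq', Finset.mem_univ, if_true]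
  have hfact : (∑ k, (∑ l, (g x)⁻¹ k l * pd u l x) * W x k) * g x i j
      = ∑ k, (∑ l, (g x)⁻¹ k l * pd u l x) * W x k * g x i j := Finset.sum_mul _ _ _
  rw [mul_assoc ((1:ℝ)/2), hfact]
  ring

lemma confKilling_conf (g : EuclideanSpace ℝ (Fin n) → Matrix (Fin n) (Fin n) ℝ)
    (hg : IsRiemannianMetric g)
    (u : EuclideanSpace ℝ (Fin n) → ℝ) (hu : Differentiable ℝ u) (hupos : ∀ x, 0 < u x)
    (hn0 : (n : ℝ) ≠ 0)
    (W : EuclideanSpace ℝ (Fin n) → Fin n → ℝ) (hW : IsSmoothOneForm W)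
    (i j : Fin n) (x : EuclideanSpace ℝ (Fin n)) :
    confKilling (fun y => u y • g y) (fun y k => u y * W y k) i j x
      = u x * confKilling g W i j x := by
  have hne : u x ≠ 0 := ne_of_gt (hupos x)
  have hcov := covDOne_conf g hg u hu hupos W hW
  unfold confKilling
  rw [hcov i j x, hcov j i x]
  simp only [smul_inv_eq g hg u hupos, Matrix.smul_apply, smul_eq_mul]
  have htrace : ∑ k, ∑ l, (u x)⁻¹ * (g x)⁻¹ k l *
      covDOne (fun y => u y • g y) (fun y k => u y * W y k) k l x
      = (∑ k, ∑ l, (g x)⁻¹ k l * covDOne g W k l x)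
        + (1 / 2) * (u x)⁻¹ * (∑ k, (∑ l, (g x)⁻¹ k l * pd u l x) * W x k) * n := by
    have key : ∀ k l : Fin n, (u x)⁻¹ * (g x)⁻¹ k l *
        covDOne (fun y => u y • g y) (fun y k => u y * W y k) k l x
        = (g x)⁻¹ k l * covDOne g W k l x
          + (1 / 2) * (u x)⁻¹ * ((g x)⁻¹ k l * (pd u k x * W x l)
              - (g x)⁻¹ k l * (pd u l x * W x k))
          + (1 / 2) * (u x)⁻¹ * (∑ m, (∑ p, (g x)⁻¹ m p * pd u p x) * W x m)
              * ((g x)⁻¹ k l * g x k l) := by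
      intro k l
      rw [hcov k l x]
      field_simp
    rw [Finset.sum_congr rfl fun k _ => Finset.sum_congr rfl fun l _ => key k l]
    simp only [Finset.sum_add_distrib]
    have hanti : ∑ k, ∑ l, ((1:ℝ) / 2) * (u x)⁻¹ * ((g x)⁻¹ k l * (pd u k x * W x l)
        - (g x)⁻¹ k l * (pd u l x * W x k)) = 0 := by
      have hswap : ∑ k, ∑ l, (g x)⁻¹ k l * (pd u k x * W x l)
          = ∑ k, ∑ l, (g x)⁻¹ k l * (pd u l x * W x k) := by
        rw [Finset.sum_comm]
        exact Finset.sum_congr rfl fun k _ => Finset.sum_congr rfl fun l _ => by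
          rw [ginvsymm g hg x l k]
      simp only [← Finset.mul_sum, Finset.sum_sub_distrib]
      rw [hswap]
      simp
    have hcontr : ∑ k : Fin n, ∑ l : Fin n, ((1:ℝ) / 2) * (u x)⁻¹ *
        (∑ m, (∑ p, (g x)⁻¹ m p * pd u p x) * W x m) * ((g x)⁻¹ k l * g x k l)
        = (1 / 2) * (u x)⁻¹ * (∑ k, (∑ l, (g x)⁻¹ k l * pd u l x) * W x k) * n := by
      simp only [← Finset.mul_sum]
      congr 1
      have h2 : ∀ k : Fin n, ∑ l, (g x)⁻¹ k l * g x k l = 1 := by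
        intro k
        rw [gdelta g hg x k k]
        simp
      rw [Finset.sum_congr rfl fun k _ => h2 k]
      simp
    rw [hanti, hcontr]
    ring
  rw [htrace, gsymm g hg x j i]
  field_simp
  ring

end Aux

/-- **Conformal covariance of the method-B parametrization.**
With `g̃ = ψ^{N-2} g`, `σ̃ = ψ^{-2} σ`, `φ̃ = ψ^{-1} φ`, `W̃ = ψ^{N-2} W`, the method-B
parametrized data built from `(g, σ, τ; φ, W)` and from `(g̃, σ̃, τ; φ̃, W̃)` coincide:
`φ^{N-2} g = φ̃^{N-2} g̃` and
`(τ/n) φ^{N-2} g + φ^{-2}(σ + φ^N L̊_g W) = (τ/n) φ̃^{N-2} g̃ + φ̃^{-2}(σ̃ + φ̃^N L̊_{g̃} W̃)`. -/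
theorem methodB_parametrization_conformal_covariance
    (n : ℕ) (hn : 3 ≤ n) (N : ℝ) (hN : N = 2 * n / ((n : ℝ) - 2))
    (g : EuclideanSpace ℝ (Fin n) → Matrix (Fin n) (Fin n) ℝ)
    (hg : IsRiemannianMetric g)
    (τ : EuclideanSpace ℝ (Fin n) → ℝ) (hτ : ContDiff ℝ (⊤ : ℕ∞) τ)
    (σ : EuclideanSpace ℝ (Fin n) → Matrix (Fin n) (Fin n) ℝ)
    (hσ : IsSmoothSym2Tensor σ)
    (φ ψ : EuclideanSpace ℝ (Fin n) → ℝ)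
    (hφpos : ∀ x, 0 < φ x) (hφ : ContDiff ℝ (⊤ : ℕ∞) φ)
    (hψpos : ∀ x, 0 < ψ x) (hψ : ContDiff ℝ (⊤ : ℕ∞) ψ)
    (W : EuclideanSpace ℝ (Fin n) → Fin n → ℝ) (hW : IsSmoothOneForm W) :
    (∀ x, hatg N g φ x
        = hatg N (fun y => ψ y ^ (N - 2) • g y) (fun y => (ψ y)⁻¹ * φ y) x)
    ∧
    (∀ x i j, hatK N g σ τ φ W x i j
        = hatK N (fun y => ψ y ^ (N - 2) • g y) (fun y => ψ y ^ (-2 : ℝ) • σ y) τ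
            (fun y => (ψ y)⁻¹ * φ y) (fun y k => ψ y ^ (N - 2) * W y k) x i j) := by
  have hn0 : (n : ℝ) ≠ 0 := by
    have : (0:ℕ) < n := by omega
    exact_mod_cast Nat.pos_iff_ne_zero.mp this
  have hupos : ∀ x, 0 < ψ x ^ (N - 2) := fun x => Real.rpow_pos_of_pos (hψpos x) _
  have hud : Differentiable ℝ (fun y => ψ y ^ (N - 2)) :=
    ((hψ.rpow_const_of_ne fun x => ne_of_gt (hψpos x)).differentiable (by simp))
  have hck : ∀ i j x, confKilling (fun y => ψ y ^ (N - 2) • g y)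
      (fun y k => ψ y ^ (N - 2) * W y k) i j x
      = ψ x ^ (N - 2) * confKilling g W i j x :=
    fun i j x => confKilling_conf g hg (fun y => ψ y ^ (N - 2)) hud hupos hn0 W hW i j x
  have hfac : ∀ (x : EuclideanSpace ℝ (Fin n)) (p : ℝ),
      ((ψ x)⁻¹ * φ x) ^ p = (ψ x ^ p)⁻¹ * φ x ^ p := by
    intro x p
    rw [Real.mul_rpow (inv_nonneg.mpr (le_of_lt (hψpos x))) (le_of_lt (hφpos x)),
      Real.inv_rpow (le_of_lt (hψpos x))]
  constructor
  · intro x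
    show φ x ^ (N - 2) • g x
        = ((ψ x)⁻¹ * φ x) ^ (N - 2) • (ψ x ^ (N - 2) • g x)
    rw [smul_smul, hfac x (N - 2)]
    congr 1
    field_simp
    rw [mul_div_assoc, div_self (ne_of_gt (hupos x)), mul_one]
  · intro x i j
    have hA : (0:ℝ) < ψ x ^ (N - 2) := hupos x
    have hB : (0:ℝ) < ψ x ^ (-2 : ℝ) := Real.rpow_pos_of_pos (hψpos x) _
    have hC : (0:ℝ) < ψ x ^ N := Real.rpow_pos_of_pos (hψpos x) _
    have habc : ψ x ^ (-2:ℝ) * ψ x ^ N = ψ x ^ (N - 2) := by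
      rw [← Real.rpow_add (hψpos x), show (-2:ℝ) + N = N - 2 by ring]
    show τ x / (n : ℝ) * (φ x ^ (N - 2) * g x i j) +
        φ x ^ (-2 : ℝ) * (σ x i j + φ x ^ N * confKilling g W i j x)
      = τ x / (n : ℝ) * (((ψ x)⁻¹ * φ x) ^ (N - 2) * (ψ x ^ (N - 2) • g x) i j) +
        ((ψ x)⁻¹ * φ x) ^ (-2 : ℝ) * ((ψ x ^ (-2:ℝ) • σ x) i j +
          ((ψ x)⁻¹ * φ x) ^ N * confKilling (fun y => ψ y ^ (N - 2) • g y)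
            (fun y k => ψ y ^ (N - 2) * W y k) i j x)
    rw [hck i j x, hfac x (N - 2), hfac x (-2 : ℝ), hfac x N]
    simp only [Matrix.smul_apply, smul_eq_mul]
    rw [← habc]
    field_simp
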